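/- Let a be a real number with |a| ≤ 2m^{(k−1)/2} for a positive real m and let α, β be the (complex) roots of x² − a·x + m^{k−1}. Then for any odd prime q, (α^q − β^q)/(α − β) = ∏_{j=1}^{(q−1)/2} ( a² − 4 cos²(πj/q) · m^{k−1} ), provided α ≠ β. -/

import Mathlib

open Real

/-- Factorization of `(α^q - β^q)/(α - β)` for the roots `α, β` of
`x² - a·x + m^(k-1)`, `q` an odd prime. -/
theorem lucas_q_product (m : ℝ) (hm : 0 < m) (k : ℕ) (hk : 1 ≤ k) (a : ℝ)
    (ha : |a| ≤ 2 * m ^ (((k : ℝ) - 1) / 2))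
    (α β : ℂ) (hαβ : α ≠ β) (hsum : α + β = (a : ℂ)) (hprod : α * β = (m : ℂ) ^ (k - 1))
    (q : ℕ) (hq : q.Prime) (hodd : Odd q) :
    (α ^ q - β ^ q) / (α - β) =
      ∏ j ∈ Finset.Icc 1 ((q - 1) / 2),
        ((a : ℂ) ^ 2 - 4 * (Real.cos (π * j / q) : ℂ) ^ 2 * (m : ℂ) ^ (k - 1)) := by
  obtain ⟨h, hq2⟩ := hodd
  have hq0 : q ≠ 0 := hq.ne_zero
  haveI : NeZero q := ⟨hq0⟩
  have hhalf : (q - 1) / 2 = h := by omega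
  set μ : ℂ := Complex.exp (2 * π * Complex.I / q) with hμdef
  have hμ : IsPrimitiveRoot μ q := Complex.isPrimitiveRoot_exp q hq0
  have hfact : α ^ q - β ^ q = ∏ ζ ∈ Polynomial.nthRootsFinset q (1 : ℂ), (α - ζ * β) :=
    IsPrimitiveRoot.pow_sub_pow_eq_prod_sub_mul (x := α) (y := β) hq.pos hμ
  -- rewrite the product over nth roots as a product over `range q`
  have himg : Polynomial.nthRootsFinset q (1 : ℂ) = (Finset.range q).image (μ ^ ·) := by
    ext ζ
    simp only [Polynomial.mem_nthRootsFinset hq.pos, Finset.mem_image, Finset.mem_range]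
    constructor
    · intro hζ
      obtain ⟨i, hi, hiζ⟩ := hμ.eq_pow_of_pow_eq_one (k := q) (ξ := ζ)
        (by exact_mod_cast hζ)
      exact ⟨i, hi, hiζ⟩
    · rintro ⟨i, hi, rfl⟩
      rw [← pow_mul, mul_comm, pow_mul, hμ.pow_eq_one, one_pow]
  have hrange : α ^ q - β ^ q = ∏ j ∈ Finset.range q, (α - μ ^ j * β) := by
    rw [hfact, himg, Finset.prod_image]
    intro i hi j hj hij
    exact hμ.pow_inj (Finset.mem_range.mp hi) (Finset.mem_range.mp hj) hij
  -- peel off j = 0 and pair the rest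
  have hsplit : ∏ j ∈ Finset.range q, (α - μ ^ j * β) =
      (α - β) * ∏ j ∈ Finset.Icc 1 h, ((α - μ ^ j * β) * (α - μ ^ (q - j) * β)) := by
    rw [Finset.range_eq_Ico, Finset.prod_eq_prod_Ico_succ_bot hq.pos]
    congr 1
    · simp
    · rw [Finset.prod_mul_distrib]
      have h1 : ∏ j ∈ Finset.Icc 1 h, (α - μ ^ j * β) =
          ∏ j ∈ Finset.Ico 1 (h + 1), (α - μ ^ j * β) := by
        congr 1
      have h2 : ∏ j ∈ Finset.Icc 1 h, (α - μ ^ (q - j) * β) =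
          ∏ j ∈ Finset.Ico (h + 1) q, (α - μ ^ j * β) := by
        refine Finset.prod_nbij' (fun j => q - j) (fun j => q - j) ?_ ?_ ?_ ?_ ?_
        · intro j hj
          simp only [Finset.mem_Icc] at hj
          simp only [Finset.mem_Ico]
          omega
        · intro j hj
          simp only [Finset.mem_Ico] at hj
          simp only [Finset.mem_Icc]
          omega
        · intro j hj
          simp only [Finset.mem_Icc] at hj
          show q - (q - j) = j
          omega
        · intro j hj
          simp only [Finset.mem_Ico] at hj
          show q - (q - j) = j
          omega
        · intro j hj
          rfl
      rw [h1, h2, Finset.prod_Ico_consecutive]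
      · omega
      · omega
  -- each paired term equals the claimed real expression
  have hterm : ∀ j ∈ Finset.Icc 1 h,
      (α - μ ^ j * β) * (α - μ ^ (q - j) * β) =
        (a : ℂ) ^ 2 - 4 * (Real.cos (π * j / q) : ℂ) ^ 2 * (m : ℂ) ^ (k - 1) := by
    intro j hj
    simp only [Finset.mem_Icc] at hj
    have hμq : μ ^ q = 1 := hμ.pow_eq_one
    have hexp : ∀ n : ℕ, μ ^ n = Complex.exp ((2 * π * n / q) * Complex.I) := by
      intro n
      rw [hμdef, ← Complex.exp_nat_mul]
      ring_nf
    have hq' : (q : ℂ) ≠ 0 := Nat.cast_ne_zero.mpr hq0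
    have key : ∀ z : ℂ, Complex.exp (z * Complex.I) + Complex.exp (-z * Complex.I)
        = 2 * Complex.cos z := by
      intro z
      rw [Complex.exp_mul_I, Complex.exp_mul_I, Complex.cos_neg, Complex.sin_neg]
      ring
    have e3 : μ ^ (q - j) = Complex.exp (-(2 * π * j / q) * Complex.I) := by
      have hqj : ((q - j : ℕ) : ℂ) = (q : ℂ) - (j : ℂ) := by
        push_cast [Nat.cast_sub (by omega : j ≤ q)]
        ring
      rw [hexp (q - j), hqj,
        show (2 * ↑π * ((q : ℂ) - j) / q) * Complex.I
          = 2 * ↑π * Complex.I + (-(2 * ↑π * j / q)) * Complex.I by field_simp; ring,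
        Complex.exp_add, Complex.exp_two_pi_mul_I, one_mul]
    have hμsum : μ ^ j + μ ^ (q - j) = 2 * Complex.cos (2 * π * j / q) := by
      rw [hexp j, e3, key]
    have hμprod : μ ^ j * μ ^ (q - j) = 1 := by
      rw [← pow_add]
      have : j + (q - j) = q := by omega
      rw [this, hμq]
    have hc : Complex.cos (2 * ↑π * (j : ℂ) / q) =
        2 * (Real.cos (π * j / q) : ℂ) ^ 2 - 1 := by
      have harg : (2 * ↑π * (j : ℂ) / q) = ((2 * (π * j / q) : ℝ) : ℂ) := by
        push_cast; ring
      rw [harg, ← Complex.ofReal_cos, Real.cos_two_mul]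
      push_cast
      ring
    have expand : (α - μ ^ j * β) * (α - μ ^ (q - j) * β) =
        (α + β) ^ 2 - 2 * (α * β) - (μ ^ j + μ ^ (q - j)) * (α * β)
          + (μ ^ j * μ ^ (q - j) - 1) * β ^ 2 := by ring
    rw [expand, hμprod, hsum, hprod, hμsum, hc]
    ring
  rw [hrange, hsplit, mul_comm, mul_div_assoc, div_self (sub_ne_zero.mpr hαβ), mul_one,
    hhalf, Finset.prod_congr rfl hterm]
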